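/- Let Y be a subset of the finite set X. The set M_S(Y) of minimal straight permutator words of Y is a finite code: M_S(Y) is finite, and every word that is a concatenation of elements of M_S(Y) admits exactly one factorization into elements of M_S(Y). -/
import Mathlib


/-- Realization of a word (list of generators), applied left to right. -/
def realize {X : Type*} (w : List (X → X)) : X → X :=
  fun x => w.foldl (fun a f => f a) x

/-- `w` is a word over the generator set `T`: a nonempty list of elements of `T`. -/
def IsWordOver {X : Type*} (T : Finset (X → X)) (w : List (X → X)) : Prop :=
  w ≠ [] ∧ ∀ f ∈ w, f ∈ T

/-- A word is straight if no nonempty proper prefix realizes the identity, and distinct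
nonempty prefixes realize distinct transformations. -/
def IsStraight {X : Type*} (w : List (X → X)) : Prop :=
  (∀ k, 1 ≤ k → k < w.length → realize (w.take k) ≠ id) ∧
  (∀ k l, 1 ≤ k → k ≤ w.length → 1 ≤ l → l ≤ w.length →
    realize (w.take k) = realize (w.take l) → k = l)

/-- The semigroup generated by `T`: all transformations realized by nonempty words over `T`. -/
def SgpGen {X : Type*} (T : Finset (X → X)) : Set (X → X) :=
  {s | ∃ w : List (X → X), IsWordOver T w ∧ realize w = s}

/-- A permutator word of `Y`: a word over `T` whose realization maps `Y` onto `Y`. -/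
def Permutator {X : Type*} (T : Finset (X → X)) (Y : Set X) (w : List (X → X)) : Prop :=
  IsWordOver T w ∧ realize w '' Y = Y

/-- A minimal permutator word of `Y`: a permutator word not factorizable into two
permutator words. -/
def MinPermutator {X : Type*} (T : Finset (X → X)) (Y : Set X) (w : List (X → X)) : Prop :=
  Permutator T Y w ∧ ¬ ∃ u v, w = u ++ v ∧ Permutator T Y u ∧ Permutator T Y v

/-- The full permutator semigroup `Perm(Y)` of elements of `⟨T⟩` mapping `Y` onto `Y`. -/
def PermSet {X : Type*} (T : Finset (X → X)) (Y : Set X) : Set (X → X) :=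
  {s | s ∈ SgpGen T ∧ s '' Y = Y}

lemma realize_append' {X : Type*} (u v : List (X → X)) :
    realize (u ++ v) = realize v ∘ realize u := by
  funext x; simp [realize, List.foldl_append]

lemma minperm_prefix_eq {X : Type*} {T : Finset (X → X)} {Y : Set X}
    {u u' : List (X → X)} (hu : MinPermutator T Y u) (hu' : MinPermutator T Y u')
    (h : u <+: u') : u = u' := by
  obtain ⟨v, rfl⟩ := h
  rcases v.eq_nil_or_concat with rfl | hv
  · simp
  · exfalso
    apply hu'.2
    refine ⟨u, v, rfl, hu.1, ?_, ?_⟩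
    · constructor
      · rintro rfl; obtain ⟨_, _, h⟩ := hv; simp at h
      · intro f hf; exact hu'.1.1.2 f (by simp [hf])
    · have h1 : realize (u ++ v) '' Y = Y := hu'.1.2
      rw [realize_append', Set.image_comp, hu.1.2] at h1
      exact h1

lemma code_lemma {X : Type*} {T : Finset (X → X)} {Y : Set X} :
    ∀ L L' : List (List (X → X)),
      (∀ u ∈ L, MinPermutator T Y u) → (∀ u ∈ L', MinPermutator T Y u) →
      L.flatten = L'.flatten → L = L' := by
  intro L
  induction L with
  | nil =>
    intro L' _ hL' h
    cases L' with
    | nil => rfl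
    | cons u t =>
      exfalso
      have : u ≠ [] := (hL' u (by simp)).1.1.1
      simp at h
      exact this h.1
  | cons u t ih =>
    intro L' hL hL' h
    cases L' with
    | nil =>
      exfalso
      have : u ≠ [] := (hL u (by simp)).1.1.1
      simp at h
      exact this h.1
    | cons u' t' =>
      simp only [List.flatten_cons] at h
      have hpre : u = u' := by
        rcases le_total u.length u'.length with hle | hle
        · exact minperm_prefix_eq (hL u (by simp)) (hL' u' (by simp))
            (List.prefix_of_prefix_length_le ⟨_, h⟩ (u'.prefix_append _) hle)
        · exact (minperm_prefix_eq (hL' u' (by simp)) (hL u (by simp))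
            (List.prefix_of_prefix_length_le ⟨_, h.symm⟩ (u.prefix_append _) hle)).symm
      subst hpre
      have htail : t.flatten = t'.flatten := List.append_cancel_left h
      have : t = t' := ih t' (fun v hv => hL v (by simp [hv]))
        (fun v hv => hL' v (by simp [hv])) htail
      rw [this]

lemma straight_length_le {X : Type*} [Fintype X] {w : List (X → X)}
    (hw : IsStraight w) : w.length ≤ Nat.card (X → X) := by
  have hinj : Function.Injective (fun k : Fin w.length => realize (w.take (k + 1))) := by
    intro k l hkl
    have := hw.2 (k + 1) (l + 1) (Nat.le_add_left _ _) (Nat.succ_le_of_lt k.2)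
      (Nat.le_add_left _ _) (Nat.succ_le_of_lt l.2) hkl
    exact Fin.ext (Nat.succ_injective this)
  simpa using Nat.card_le_card_of_injective _ hinj

/-- `M_S(Y)` is a finite code: it is finite, and every concatenation of its elements
admits exactly one factorization into elements of `M_S(Y)`. -/
theorem minimal_straight_permutators_finite_code
    (X : Type*) [Fintype X] [Nonempty X] (T : Finset (X → X)) (Y : Set X) :
    {w : List (X → X) | MinPermutator T Y w ∧ IsStraight w}.Finite ∧
    (∀ L L' : List (List (X → X)), L ≠ [] → L' ≠ [] →
      (∀ u ∈ L, MinPermutator T Y u ∧ IsStraight u) →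
      (∀ u ∈ L', MinPermutator T Y u ∧ IsStraight u) →
      L.flatten = L'.flatten → L = L') := by
  constructor
  · apply Set.Finite.subset (List.finite_length_le (X → X) (Nat.card (X → X)))
    intro w hw
    exact straight_length_le hw.2
  · intro L L' _ _ hL hL' h
    exact code_lemma L L' (fun u hu => (hL u hu).1) (fun u hu => (hL' u hu).1) h
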